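/- Let f be a solution of the nonlinear Metropolis evolution equation ∂_t f_t(x) = ∫_E π(x)·Θ_{f_t}(y|x)·h(α_{f_t}(x,y))·(f_t(y)/π(y) − f_t(x)/π(x)) dy with initial condition f₀ a continuous positive probability density on E. Then for all t ≥ 0, inf_{x∈E} f_t(x)/π(x) ≥ inf_{x∈E} f₀(x)/π(x) and sup_{x∈E} f_t(x)/π(x) ≤ sup_{x∈E} f₀(x)/π(x). -/

import Mathlib

/-!
Write `g_t = f_t / π`. By the identity `u h(1/u) = h(u)` the Metropolis rate
`K_t(x, y) = π(x) Θ_{f_t}(y|x) h(α_{f_t}(x, y))` is symmetric in `x, y`, so the equation reads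
`∂ₜ (π g_t)(x) = ∫ K_t(x, y) (g_t(y) - g_t(x)) dy` with a symmetric kernel. Symmetrising the double
integral shows `∫ ψ(g_t) ∂ₜ f_t ≤ 0` for monotone `ψ`, so the entropy `∫ π (g_t - M)₊²` with
`M = sup g₀` is nonincreasing, hence stays zero, and `g_t ≤ M` almost everywhere. At any single
point `x` this forces `∂ₜ f_t(x) ≤ 0` as soon as `g_t(x) ≥ M`, which keeps `g_t(x) ≤ M` everywhere
on `E`, including at points that Lebesgue measure does not see. The lower bound is the upper bound
for `-g`.
-/

open MeasureTheory Set

/-- A continuous positive probability density on `E` (w.r.t. Lebesgue measure). -/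
def IsPosDensityOn {d : ℕ} (E : Set (EuclideanSpace ℝ (Fin d)))
    (g : EuclideanSpace ℝ (Fin d) → ℝ) : Prop :=
  ContinuousOn g E ∧ (∀ x ∈ E, 0 < g x) ∧ (∫ x in E, g x) = 1

open Filter Topology Asymptotics

lemma hasDerivAt_max_zero_sq (v : ℝ) : HasDerivAt (fun u => max u 0 ^ 2) (2 * max v 0) v := by
  rcases lt_trichotomy v 0 with hv | rfl | hv
  · have : (fun _ => (0 : ℝ)) =ᶠ[𝓝 v] fun u => max u 0 ^ 2 := by
      filter_upwards [Iio_mem_nhds hv] with u hu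
      rw [max_eq_right (le_of_lt hu)]; ring
    simpa [max_eq_right hv.le] using (hasDerivAt_const v (0 : ℝ)).congr_of_eventuallyEq this.symm
  · have hO : (fun u : ℝ => max u 0 ^ 2) =O[𝓝 0] fun u => u ^ 2 :=
      IsBigO.of_bound 1 (Eventually.of_forall fun u => by
        rcases le_total u 0 with hu | hu
        · simpa [hu] using sq_nonneg u
        · simp [hu])
    simpa [hasDerivAt_iff_isLittleO] using hO.trans_isLittleO (isLittleO_pow_id one_lt_two)
  · have : (fun u => u ^ 2) =ᶠ[𝓝 v] fun u => max u 0 ^ 2 := by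
      filter_upwards [Ioi_mem_nhds hv] with u hu
      rw [max_eq_left (le_of_lt hu)]
    simpa [max_eq_left hv.le, mul_comm] using (hasDerivAt_pow 2 v).congr_of_eventuallyEq this.symm

lemma hasDerivAt_max_sub_sq (c v : ℝ) :
    HasDerivAt (fun u => max (u - c) 0 ^ 2) (2 * max (v - c) 0) v :=
  (hasDerivAt_max_zero_sq (v - c)).comp_sub_const v c

lemma deriv_max_sub_sq (c : ℝ) :
    deriv (fun u => max (u - c) 0 ^ 2) = fun v => 2 * max (v - c) 0 :=
  funext fun v => (hasDerivAt_max_sub_sq c v).deriv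

lemma monotone_two_mul_max_sub (c : ℝ) : Monotone fun v : ℝ => 2 * max (v - c) 0 :=
  fun _ _ hab => by dsimp only; gcongr

lemma convexOn_max_sub_sq (c : ℝ) : ConvexOn ℝ univ fun u => max (u - c) 0 ^ 2 :=
  Monotone.convexOn_univ_of_deriv (fun v => (hasDerivAt_max_sub_sq c v).differentiableAt)
    (by rw [deriv_max_sub_sq]; exact monotone_two_mul_max_sub c)

lemma contDiff_max_sub_sq (c : ℝ) : ContDiff ℝ 1 fun u => max (u - c) 0 ^ 2 :=
  contDiff_one_iff_deriv.2 ⟨fun v => (hasDerivAt_max_sub_sq c v).differentiableAt,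
    by rw [deriv_max_sub_sq]; fun_prop⟩

lemma Monotone.sub_mul_sub_nonneg {ψ : ℝ → ℝ} (hψ : Monotone ψ) (a b : ℝ) :
    0 ≤ (ψ a - ψ b) * (a - b) := by
  rcases le_total a b with h | h
  · exact mul_nonneg_of_nonpos_of_nonpos (sub_nonpos.2 (hψ h)) (sub_nonpos.2 h)
  · exact mul_nonneg (sub_nonneg.2 (hψ h)) (sub_nonneg.2 h)

lemma nonpos_of_hasDerivWithinAt_nonpos_of_nonneg {u u' : ℝ → ℝ}
    (hu : ∀ t ∈ Ici (0 : ℝ), HasDerivWithinAt u (u' t) (Ici 0) t) (h0 : u 0 ≤ 0)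
    (hu' : ∀ t ∈ Ici (0 : ℝ), 0 ≤ u t → u' t ≤ 0) {T : ℝ} (hT : 0 ≤ T) : u T ≤ 0 := by
  -- compare with the barrier `ε (t + 1)`, which `u` can only touch where `u ≥ 0`
  have hbarrier : ∀ ε > 0, u T ≤ ε * (T + 1) := fun ε hε => by
    refine image_le_of_deriv_right_lt_deriv_boundary (a := 0) (b := T)
      (B := fun t => ε * (t + 1)) (B' := fun _ => ε)
      (fun t ht => (hu t ht.1).continuousWithinAt.mono Icc_subset_Ici_self)
      (fun t ht => (hu t ht.1).mono (Ici_subset_Ici.2 ht.1)) (by linarith)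
      (fun t => ((hasDerivAt_id' t).add_const 1).const_mul ε |>.congr_deriv (mul_one ε))
      (fun t ht hut => (hu' t ht.1 (hut ▸ mul_nonneg hε.le (by linarith [ht.1]))).trans_lt hε)
      ⟨hT, le_rfl⟩
  refine le_of_forall_pos_le_add fun δ hδ => ?_
  have hT1 : 0 < T + 1 := by linarith
  simpa [div_mul_cancel₀ _ hT1.ne'] using hbarrier (δ / (T + 1)) (div_pos hδ hT1)

lemma mul_apply_div_comm {h : ℝ → ℝ} (hsym : ∀ u : ℝ, 0 < u → u * h (1 / u) = h u)
    {a b : ℝ} (ha : 0 < a) (hb : 0 < b) : a * h (b / a) = b * h (a / b) := by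
  rw [← hsym (b / a) (div_pos hb ha), one_div_div, ← mul_assoc, mul_div_cancel₀ b ha.ne']

lemma setIntegral_mul_sub_nonpos_of_ae_le {α : Type*} [MeasurableSpace α] {μ : Measure α}
    {s : Set α} (hs : MeasurableSet s) {κ g : α → ℝ} (hκ : ∀ y ∈ s, 0 ≤ κ y) {c M : ℝ}
    (hMc : M ≤ c) (hg : ∀ᵐ y ∂μ.restrict s, g y ≤ M) :
    ∫ y in s, κ y * (g y - c) ∂μ ≤ 0 :=
  integral_nonpos_of_ae <| by
    filter_upwards [hg, ae_restrict_mem hs] with y hy hys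
    exact mul_nonpos_of_nonneg_of_nonpos (hκ y hys) (by linarith)

section JumpFlow

variable {α : Type*} [TopologicalSpace α] [MeasurableSpace α] {μ : Measure α} {s : Set α}

structure IsSymmetricKernelOn (s : Set α) (k : α → α → ℝ) : Prop where
  continuousOn : ContinuousOn (fun p : α × α => k p.1 p.2) (s ×ˢ s)
  nonneg : ∀ x ∈ s, ∀ y ∈ s, 0 ≤ k x y
  symm : ∀ x ∈ s, ∀ y ∈ s, k x y = k y x

theorem IsSymmetricKernelOn.integral_mul_integral_nonpos [T2Space α] [SecondCountableTopology α]
    [OpensMeasurableSpace α] [IsFiniteMeasureOnCompacts μ] [SFinite μ] {k : α → α → ℝ}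
    (hk : IsSymmetricKernelOn s k) (hs : IsCompact s) {g : α → ℝ} (hg : ContinuousOn g s)
    {ψ : ℝ → ℝ} (hψc : Continuous ψ) (hψ : Monotone ψ) :
    ∫ x in s, ψ (g x) * ∫ y in s, k x y * (g y - g x) ∂μ ∂μ ≤ 0 := by
  set ν := (μ.restrict s).prod (μ.restrict s)
  set F : α × α → ℝ := fun p => ψ (g p.1) * (k p.1 p.2 * (g p.2 - g p.1))
  have hν : ν = (μ.prod μ).restrict (s ×ˢ s) := Measure.prod_restrict s s
  have hF : Integrable F ν := by
    rw [hν]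
    have hg₁ : ContinuousOn (fun p : α × α => g p.1) (s ×ˢ s) :=
      hg.comp continuousOn_fst fun p hp => hp.1
    have hg₂ : ContinuousOn (fun p : α × α => g p.2) (s ×ˢ s) :=
      hg.comp continuousOn_snd fun p hp => hp.2
    exact ((hψc.comp_continuousOn hg₁).mul
      (hk.continuousOn.mul (hg₂.sub hg₁))).integrableOn_compact (hs.prod hs)
  have hiter : ∫ x in s, ψ (g x) * ∫ y in s, k x y * (g y - g x) ∂μ ∂μ = ∫ p, F p ∂ν := by
    rw [integral_prod F hF]
    exact integral_congr_ae (ae_of_all _ fun x => (integral_const_mul _ _).symm)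
  -- `F` and `F ∘ swap` have the same integral, and their sum is pointwise `≤ 0` by symmetry of `k`
  have hsum : ∫ p, F p ∂ν + ∫ p, (F ∘ Prod.swap) p ∂ν ≤ 0 := by
    rw [← integral_add hF hF.swap]
    refine integral_nonpos_of_ae ?_
    rw [hν]
    filter_upwards [ae_restrict_mem (hs.measurableSet.prod hs.measurableSet)] with ⟨x, y⟩ ⟨hx, hy⟩
    have hFF : F (x, y) + (F ∘ Prod.swap) (x, y)
        = -(k x y * ((ψ (g y) - ψ (g x)) * (g y - g x))) := by
      simp only [F, Function.comp_apply, Prod.swap_prod_mk, hk.symm x hx y hy]; ring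
    rw [Pi.zero_apply, hFF, neg_nonpos]
    exact mul_nonneg (hk.nonneg x hx y hy) (hψ.sub_mul_sub_nonneg _ _)
  have hswap : ∫ p, (F ∘ Prod.swap) p ∂ν = ∫ p, F p ∂ν := integral_prod_swap F
  linarith

lemma ae_le_of_setIntegral_mul_max_sub_sq_nonpos [T2Space α] [OpensMeasurableSpace α]
    [IsFiniteMeasureOnCompacts μ] (hs : IsCompact s) {w g : α → ℝ} (hw : ContinuousOn w s)
    (hw₀ : ∀ x ∈ s, 0 < w x) (hg : ContinuousOn g s) {M : ℝ}
    (hV : ∫ x in s, w x * max (g x - M) 0 ^ 2 ∂μ ≤ 0) : ∀ᵐ x ∂μ.restrict s, g x ≤ M := by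
  have hnonneg : ∀ x ∈ s, 0 ≤ w x * max (g x - M) 0 ^ 2 := fun x hx =>
    mul_nonneg (hw₀ x hx).le (sq_nonneg _)
  have hint : IntegrableOn (fun x => w x * max (g x - M) 0 ^ 2) s μ :=
    ContinuousOn.integrableOn_compact hs (by fun_prop)
  have hzero := (setIntegral_eq_zero_iff_of_nonneg_ae
    (ae_restrict_of_forall_mem hs.measurableSet hnonneg) hint).1
    (le_antisymm hV (setIntegral_nonneg hs.measurableSet hnonneg))
  filter_upwards [hzero, ae_restrict_mem hs.measurableSet] with x hx hxs
  have hmax : max (g x - M) 0 = 0 :=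
    pow_eq_zero_iff two_ne_zero |>.1 <| (mul_eq_zero.1 hx).resolve_left (hw₀ x hxs).ne'
  exact sub_nonpos.1 (max_eq_right_iff.1 hmax)

structure IsJumpFlow (μ : Measure α) (s : Set α) (w : α → ℝ) (K : ℝ → α → α → ℝ)
    (g : ℝ → α → ℝ) : Prop where
  continuousOn_weight : ContinuousOn w s
  weight_pos : ∀ x ∈ s, 0 < w x
  isSymmetricKernelOn : ∀ t ∈ Ici (0 : ℝ), IsSymmetricKernelOn s (K t)
  continuousOn : ∀ t ∈ Ici (0 : ℝ), ContinuousOn (g t) s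
  hasDerivWithinAt : ∀ t ∈ Ici (0 : ℝ), ∀ x ∈ s,
    HasDerivWithinAt (fun r => w x * g r x) (∫ y in s, K t x y * (g t y - g t x) ∂μ) (Ici 0) t
  hasDerivWithinAt_integral : ∀ φ : ℝ → ℝ, ConvexOn ℝ univ φ → ContDiff ℝ 1 φ →
    ∀ t ∈ Ici (0 : ℝ), HasDerivWithinAt (fun r => ∫ x in s, w x * φ (g r x) ∂μ)
      (∫ x in s, deriv φ (g t x) * ∫ y in s, K t x y * (g t y - g t x) ∂μ ∂μ) (Ici 0) t

namespace IsJumpFlow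

variable {w : α → ℝ} {K : ℝ → α → α → ℝ} {g : ℝ → α → ℝ}

theorem neg (hflow : IsJumpFlow μ s w K g) : IsJumpFlow μ s w K fun t x => -g t x where
  continuousOn_weight := hflow.continuousOn_weight
  weight_pos := hflow.weight_pos
  isSymmetricKernelOn := hflow.isSymmetricKernelOn
  continuousOn t ht := (hflow.continuousOn t ht).neg
  hasDerivWithinAt t ht x hx := by
    have hfun : (fun r => w x * -g r x) = fun r => -(w x * g r x) := by
      funext r; ring
    have hflux : ∫ y in s, K t x y * (-g t y - -g t x) ∂μ
        = -∫ y in s, K t x y * (g t y - g t x) ∂μ := by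
      rw [← integral_neg]; exact integral_congr_ae (ae_of_all _ fun y => by ring)
    rw [hfun, hflux]
    exact (hflow.hasDerivWithinAt t ht x hx).neg
  hasDerivWithinAt_integral φ hφ hφ₁ t ht := by
    have hφneg : ConvexOn ℝ univ fun v => φ (-v) := by
      refine ⟨convex_univ, fun a _ b _ p q hp hq hpq => ?_⟩
      simpa [smul_eq_mul, neg_add, mul_neg, add_comm] using
        hφ.2 (mem_univ (-a)) (mem_univ (-b)) hp hq hpq
    convert hflow.hasDerivWithinAt_integral _ hφneg (hφ₁.comp contDiff_neg) t ht using 1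
    congr 1; ext x
    rw [deriv_comp_neg, neg_mul, ← mul_neg, ← integral_neg]
    exact congrArg _ (integral_congr_ae (ae_of_all _ fun y => by ring))

variable [T2Space α] [SecondCountableTopology α] [OpensMeasurableSpace α]
  [IsFiniteMeasureOnCompacts μ] [SFinite μ]

theorem ae_le_of_initial_le (hflow : IsJumpFlow μ s w K g) (hs : IsCompact s) {M : ℝ}
    (hM : ∀ x ∈ s, g 0 x ≤ M) {t : ℝ} (ht : 0 ≤ t) : ∀ᵐ x ∂μ.restrict s, g t x ≤ M := by
  set V := fun r => ∫ x in s, w x * max (g r x - M) 0 ^ 2 ∂μ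
  have hV := fun r (hr : r ∈ Ici (0 : ℝ)) => hflow.hasDerivWithinAt_integral _
    (convexOn_max_sub_sq M) (contDiff_max_sub_sq M) r hr
  have hanti : AntitoneOn V (Ici 0) := by
    refine antitoneOn_of_hasDerivWithinAt_nonpos (convex_Ici 0)
      (fun r hr => (hV r hr).continuousWithinAt)
      (fun r hr => (hV r (interior_subset hr)).mono interior_subset) fun r hr => ?_
    rw [deriv_max_sub_sq]
    exact (hflow.isSymmetricKernelOn r (interior_subset hr)).integral_mul_integral_nonpos hs
      (hflow.continuousOn r (interior_subset hr)) (by fun_prop) (monotone_two_mul_max_sub M)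
  have hV₀ : V 0 = 0 := by
    refine setIntegral_eq_zero_of_forall_eq_zero fun x hx => ?_
    rw [max_eq_right (sub_nonpos.2 (hM x hx))]; ring
  exact ae_le_of_setIntegral_mul_max_sub_sq_nonpos hs hflow.continuousOn_weight hflow.weight_pos
    (hflow.continuousOn t ht) ((hanti self_mem_Ici ht ht).trans_eq hV₀)

theorem le_of_initial_le (hflow : IsJumpFlow μ s w K g) (hs : IsCompact s) {M : ℝ}
    (hM : ∀ x ∈ s, g 0 x ≤ M) {t : ℝ} (ht : 0 ≤ t) {x : α} (hx : x ∈ s) : g t x ≤ M := by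
  have hwx := hflow.weight_pos x hx
  suffices w x * g t x - w x * M ≤ 0 from le_of_mul_le_mul_left (by linarith) hwx
  refine nonpos_of_hasDerivWithinAt_nonpos_of_nonneg
    (fun r hr => (hflow.hasDerivWithinAt r hr x hx).sub_const (w x * M))
    (by nlinarith [hM x hx]) (fun r hr hr₀ => ?_) ht
  exact setIntegral_mul_sub_nonpos_of_ae_le hs.measurableSet
    (fun y hy => (hflow.isSymmetricKernelOn r hr).nonneg x hx y hy)
    (le_of_mul_le_mul_left (by linarith) hwx) (hflow.ae_le_of_initial_le hs hM hr)

theorem ge_of_initial_ge (hflow : IsJumpFlow μ s w K g) (hs : IsCompact s) {m : ℝ}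
    (hm : ∀ x ∈ s, m ≤ g 0 x) {t : ℝ} (ht : 0 ≤ t) {x : α} (hx : x ∈ s) : m ≤ g t x :=
  neg_le_neg_iff.1 <| hflow.neg.le_of_initial_le hs (fun y hy => neg_le_neg (hm y hy)) ht hx

end IsJumpFlow

end JumpFlow

section Metropolis

variable {α : Type*} [TopologicalSpace α] {s : Set α}

/-- `Θ x y` stands for the proposal density `Θ(y|x)`. -/
noncomputable def metropolisKernel (π : α → ℝ) (Θ : α → α → ℝ) (h : ℝ → ℝ) (x y : α) : ℝ :=
  π x * Θ x y * h (Θ y x * π y / (Θ x y * π x))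

theorem isSymmetricKernelOn_metropolisKernel {π : α → ℝ} {Θ : α → α → ℝ} {h : ℝ → ℝ}
    (hπ : ContinuousOn π s) (hπ₀ : ∀ x ∈ s, 0 < π x)
    (hΘ : ContinuousOn (fun p : α × α => Θ p.1 p.2) (s ×ˢ s)) (hΘ₀ : ∀ x ∈ s, ∀ y ∈ s, 0 < Θ x y)
    (hh : ContinuousOn h (Ici 0)) (hh₀ : ∀ u ∈ Ici (0 : ℝ), 0 ≤ h u)
    (hsym : ∀ u : ℝ, 0 < u → u * h (1 / u) = h u) :
    IsSymmetricKernelOn s (metropolisKernel π Θ h) where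
  continuousOn := by
    have hπ₁ : ContinuousOn (fun p : α × α => π p.1) (s ×ˢ s) :=
      hπ.comp continuousOn_fst fun p hp => hp.1
    have hπ₂ : ContinuousOn (fun p : α × α => π p.2) (s ×ˢ s) :=
      hπ.comp continuousOn_snd fun p hp => hp.2
    have hΘswap : ContinuousOn (fun p : α × α => Θ p.2 p.1) (s ×ˢ s) :=
      hΘ.comp continuous_swap.continuousOn fun p hp => ⟨hp.2, hp.1⟩
    refine (hπ₁.mul hΘ).mul
      (hh.comp ((hΘswap.mul hπ₂).div (hΘ.mul hπ₁) fun p hp => ?_) fun p hp => ?_)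
    · exact (mul_pos (hΘ₀ _ hp.1 _ hp.2) (hπ₀ _ hp.1)).ne'
    · exact div_nonneg (mul_pos (hΘ₀ _ hp.2 _ hp.1) (hπ₀ _ hp.2)).le
        (mul_pos (hΘ₀ _ hp.1 _ hp.2) (hπ₀ _ hp.1)).le
  nonneg x hx y hy := mul_nonneg (mul_pos (hπ₀ x hx) (hΘ₀ x hx y hy)).le <| hh₀ _ <|
    div_nonneg (mul_pos (hΘ₀ y hy x hx) (hπ₀ y hy)).le (mul_pos (hΘ₀ x hx y hy) (hπ₀ x hx)).le
  symm x hx y hy := by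
    have := mul_apply_div_comm hsym (mul_pos (hΘ₀ x hx y hy) (hπ₀ x hx))
      (mul_pos (hΘ₀ y hy x hx) (hπ₀ y hy))
    simp only [metropolisKernel]
    linear_combination this

end Metropolis

theorem stmt_8_general {d : ℕ} (E : Set (EuclideanSpace ℝ (Fin d))) (hE : IsCompact E)
    (π : EuclideanSpace ℝ (Fin d) → ℝ) (hπ : IsPosDensityOn E π)
    (h : ℝ → ℝ)
    (hcont : ContinuousOn h (Set.Ici 0))
    (hrange : ∀ u ∈ Set.Ici (0 : ℝ), h u ∈ Set.Icc (0 : ℝ) 1)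
    (hsym : ∀ u : ℝ, 0 < u → u * h (1 / u) = h u)
    (Θ : (EuclideanSpace ℝ (Fin d) → ℝ) →
      EuclideanSpace ℝ (Fin d) → EuclideanSpace ℝ (Fin d) → ℝ)
    (hΘ : ∀ g, IsPosDensityOn E g →
      ContinuousOn (fun p : EuclideanSpace ℝ (Fin d) × EuclideanSpace ℝ (Fin d) =>
        Θ g p.1 p.2) (E ×ˢ E) ∧
      (∀ x ∈ E, ∀ y ∈ E, 0 < Θ g x y) ∧
      (∀ x ∈ E, (∫ y in E, Θ g x y) = 1))
    (f : ℝ → EuclideanSpace ℝ (Fin d) → ℝ)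
    (hft : ∀ t ∈ Set.Ici (0 : ℝ), IsPosDensityOn E (f t))
    (hderiv : ∀ t ∈ Set.Ici (0 : ℝ), ∀ x ∈ E,
      HasDerivWithinAt (fun s => f s x)
        (∫ y in E, π x * Θ (f t) x y *
          h (Θ (f t) y x * π y / (Θ (f t) x y * π x)) *
          (f t y / π y - f t x / π x)) (Set.Ici 0) t)
    (hentropy : ∀ φ : ℝ → ℝ, ConvexOn ℝ Set.univ φ → ContDiff ℝ 1 φ →
      ∀ t ∈ Set.Ici (0 : ℝ),
      HasDerivWithinAt (fun s => ∫ x in E, π x * φ (f s x / π x))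
        (∫ x in E, deriv φ (f t x / π x) *
          (∫ y in E, π x * Θ (f t) x y *
            h (Θ (f t) y x * π y / (Θ (f t) x y * π x)) *
            (f t y / π y - f t x / π x))) (Set.Ici 0) t) :
    ∀ t ∈ Set.Ici (0 : ℝ),
      sInf ((fun x => f 0 x / π x) '' E) ≤ sInf ((fun x => f t x / π x) '' E) ∧
      sSup ((fun x => f t x / π x) '' E) ≤ sSup ((fun x => f 0 x / π x) '' E) := by
  obtain ⟨hπc, hπ₀, hπ₁⟩ := hπ
  have hflow : IsJumpFlow volume E π (fun t => metropolisKernel π (Θ (f t)) h)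
      (fun t x => f t x / π x) :=
    { continuousOn_weight := hπc
      weight_pos := hπ₀
      isSymmetricKernelOn := fun r hr => isSymmetricKernelOn_metropolisKernel hπc hπ₀
        (hΘ (f r) (hft r hr)).1 (hΘ (f r) (hft r hr)).2.1 hcont (fun u hu => (hrange u hu).1) hsym
      continuousOn := fun r hr => (hft r hr).1.div hπc fun x hx => (hπ₀ x hx).ne'
      hasDerivWithinAt := fun r hr x hx => by
        simpa only [mul_div_cancel₀ _ (hπ₀ x hx).ne', metropolisKernel] using hderiv r hr x hx
      hasDerivWithinAt_integral := hentropy }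
  have hEne : E.Nonempty := nonempty_iff_ne_empty.2 fun hE₀ => by simp [hE₀] at hπ₁
  have himage := hE.image_of_continuousOn (hflow.continuousOn 0 self_mem_Ici)
  intro t ht
  refine ⟨le_csInf (hEne.image _) (forall_mem_image.2 fun x hx => ?_),
    csSup_le (hEne.image _) (forall_mem_image.2 fun x hx => ?_)⟩
  · exact hflow.ge_of_initial_ge hE
      (fun y hy => csInf_le himage.bddBelow (mem_image_of_mem _ hy)) ht hx
  · exact hflow.le_of_initial_le hE
      (fun y hy => le_csSup himage.bddAbove (mem_image_of_mem _ hy)) ht hx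

/-- Let `f` solve the nonlinear Metropolis evolution equation
`∂_t f_t(x) = ∫_E π(x)Θ_{f_t}(y|x)h(α_{f_t}(x,y))(f_t(y)/π(y) − f_t(x)/π(x)) dy`
with initial condition `f₀` a continuous positive probability density on `E`. Then
for all `t ≥ 0`, `inf_E f_t/π ≥ inf_E f₀/π` and `sup_E f_t/π ≤ sup_E f₀/π`.
Here `Θ g x y` denotes `Θ_g(y|x)`. -/
theorem stmt_8 {d : ℕ} (E : Set (EuclideanSpace ℝ (Fin d))) (hE : IsCompact E)
    (π : EuclideanSpace ℝ (Fin d) → ℝ) (hπ : IsPosDensityOn E π)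
    (h : ℝ → ℝ)
    (hcont : ContinuousOn h (Set.Ici 0))
    (hmono : MonotoneOn h (Set.Ici 0))
    (hrange : ∀ u ∈ Set.Ici (0 : ℝ), h u ∈ Set.Icc (0 : ℝ) 1)
    (hlip : ∃ L : NNReal, LipschitzOnWith L h (Set.Ici 0))
    (hsym : ∀ u : ℝ, 0 < u → u * h (1 / u) = h u)
    (Θ : (EuclideanSpace ℝ (Fin d) → ℝ) →
      EuclideanSpace ℝ (Fin d) → EuclideanSpace ℝ (Fin d) → ℝ)
    (hΘ : ∀ g, IsPosDensityOn E g →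
      ContinuousOn (fun p : EuclideanSpace ℝ (Fin d) × EuclideanSpace ℝ (Fin d) =>
        Θ g p.1 p.2) (E ×ˢ E) ∧
      (∀ x ∈ E, ∀ y ∈ E, 0 < Θ g x y) ∧
      (∀ x ∈ E, (∫ y in E, Θ g x y) = 1))
    (f : ℝ → EuclideanSpace ℝ (Fin d) → ℝ)
    (hfc : ContinuousOn (fun p : ℝ × EuclideanSpace ℝ (Fin d) => f p.1 p.2)
      (Set.Ici 0 ×ˢ E))
    (hft : ∀ t ∈ Set.Ici (0 : ℝ), IsPosDensityOn E (f t))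
    (hderiv : ∀ t ∈ Set.Ici (0 : ℝ), ∀ x ∈ E,
      HasDerivWithinAt (fun s => f s x)
        (∫ y in E, π x * Θ (f t) x y *
          h (Θ (f t) y x * π y / (Θ (f t) x y * π x)) *
          (f t y / π y - f t x / π x)) (Set.Ici 0) t)
    (hentropy : ∀ φ : ℝ → ℝ, ConvexOn ℝ Set.univ φ → ContDiff ℝ 1 φ →
      ∀ t ∈ Set.Ici (0 : ℝ),
      HasDerivWithinAt (fun s => ∫ x in E, π x * φ (f s x / π x))
        (∫ x in E, deriv φ (f t x / π x) *
          (∫ y in E, π x * Θ (f t) x y *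
            h (Θ (f t) y x * π y / (Θ (f t) x y * π x)) *
            (f t y / π y - f t x / π x))) (Set.Ici 0) t) :
    ∀ t ∈ Set.Ici (0 : ℝ),
      sInf ((fun x => f 0 x / π x) '' E) ≤ sInf ((fun x => f t x / π x) '' E) ∧
      sSup ((fun x => f t x / π x) '' E) ≤ sSup ((fun x => f 0 x / π x) '' E) :=
  stmt_8_general E hE π hπ h hcont hrange hsym Θ hΘ f hft hderiv hentropy
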